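/- Soundness of 2CH: for every agent a ∈ A and every agent formula φ of sort a, if ⊢_a φ then H,v ⊨_a φ for every chromatic hypergraph model H and every view v ∈ V_a; and for every world formula Φ, if ⊢_e Φ then H,e ⊨_e Φ for every chromatic hypergraph model H and every hyperedge e ∈ E. -/

import Mathlib

/-! ## Syntax of the two-level chromatic hypergraph logic 2CH -/

mutual
/-- Agent formulas of sort `a`, for each agent `a : A`. -/
inductive AForm (A : Type) (APa : A → Type) (APe : Type) : A → Type where
  | atom {a : A} : APa a → AForm A APa APe a
  | bot  {a : A} : AForm A APa APe a
  | neg  {a : A} : AForm A APa APe a → AForm A APa APe a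
  | and  {a : A} : AForm A APa APe a → AForm A APa APe a → AForm A APa APe a
  | dia  (a : A) : WForm A APa APe → AForm A APa APe a

/-- World formulas. -/
inductive WForm (A : Type) (APa : A → Type) (APe : Type) : Type where
  | atom : APe → WForm A APa APe
  | bot  : WForm A APa APe
  | neg  : WForm A APa APe → WForm A APa APe
  | and  : WForm A APa APe → WForm A APa APe → WForm A APa APe
  | exi  (a : A) : AForm A APa APe a → WForm A APa APe
end

variable {A : Type} {APa : A → Type} {APe : Type}

/-- Implication of agent formulas. -/
def implA {a : A} (φ ψ : AForm A APa APe a) : AForm A APa APe a := .neg (.and φ (.neg ψ))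
/-- Disjunction of agent formulas. -/
def orA {a : A} (φ ψ : AForm A APa APe a) : AForm A APa APe a := .neg (.and (.neg φ) (.neg ψ))
/-- `⊤` as an agent formula. -/
def topA (a : A) : AForm A APa APe a := .neg .bot
/-- Implication of world formulas. -/
def implW (Φ Ψ : WForm A APa APe) : WForm A APa APe := .neg (.and Φ (.neg Ψ))
/-- Disjunction of world formulas. -/
def orW (Φ Ψ : WForm A APa APe) : WForm A APa APe := .neg (.and (.neg Φ) (.neg Ψ))
/-- The dual modality `□_a Φ := ¬◇_a ¬Φ`. -/
def boxF (a : A) (Φ : WForm A APa APe) : AForm A APa APe a := .neg (.dia a (.neg Φ))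
/-- The dual modality `A_a φ := ¬E_a ¬φ`. -/
def allF (a : A) (φ : AForm A APa APe a) : WForm A APa APe := .neg (.exi a (.neg φ))
/-- Finite disjunction of a list of world formulas. -/
def listOrW : List (WForm A APa APe) → WForm A APa APe
  | [] => .bot
  | Φ :: rest => orW Φ (listOrW rest)

/-- The non-emptiness axiom `⋁_{a∈A} E_a ⊤`. -/
noncomputable def neAxiom (A : Type) [Fintype A] (APa : A → Type) (APe : Type) : WForm A APa APe :=
  listOrW (((Finset.univ : Finset A).toList).map fun a => WForm.exi a (topA a))

/-- `φ` is an instance of a classical propositional tautology (agent sort):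
every Boolean valuation respecting `⊥`, `¬`, `∧` makes it true. -/
def ATaut {a : A} (φ : AForm A APa APe a) : Prop :=
  ∀ v : AForm A APa APe a → Bool,
    v .bot = false →
    (∀ ψ : AForm A APa APe a, v ψ.neg = !(v ψ)) →
    (∀ ψ χ : AForm A APa APe a, v (ψ.and χ) = (v ψ && v χ)) →
    v φ = true

/-- `Φ` is an instance of a classical propositional tautology (world sort). -/
def WTaut (Φ : WForm A APa APe) : Prop :=
  ∀ v : WForm A APa APe → Bool,
    v .bot = false →
    (∀ Ψ : WForm A APa APe, v Ψ.neg = !(v Ψ)) →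
    (∀ Ψ Χ : WForm A APa APe, v (Ψ.and Χ) = (v Ψ && v Χ)) →
    v Φ = true

/-! ## The proof system of 2CH -/

mutual
/-- Derivability `⊢_a` of agent formulas of sort `a`. -/
inductive ProveA (A : Type) [Fintype A] (APa : A → Type) (APe : Type) :
    ∀ {a : A}, AForm A APa APe a → Prop where
  | taut {a : A} {φ : AForm A APa APe a} : ATaut φ → ProveA A APa APe φ
  | mp {a : A} {φ ψ : AForm A APa APe a} :
      ProveA A APa APe (implA φ ψ) → ProveA A APa APe φ → ProveA A APa APe ψ
  | nec {a : A} {Φ : WForm A APa APe} :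
      ProveE A APa APe Φ → ProveA A APa APe (boxF a Φ)
  | monoDia {a : A} {Φ Ψ : WForm A APa APe} :
      ProveE A APa APe (implW Φ Ψ) →
      ProveA A APa APe (implA (AForm.dia a Φ) (AForm.dia a Ψ))
  | monoBox {a : A} {Φ Ψ : WForm A APa APe} :
      ProveE A APa APe (implW Φ Ψ) →
      ProveA A APa APe (implA (boxF a Φ) (boxF a Ψ))
  | adj1 {a : A} {Φ : WForm A APa APe} {ψ : AForm A APa APe a} :
      ProveE A APa APe (implW Φ (allF a ψ)) →
      ProveA A APa APe (implA (AForm.dia a Φ) ψ)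
  | adj2 {a : A} {φ : AForm A APa APe a} {Ψ : WForm A APa APe} :
      ProveE A APa APe (implW (WForm.exi a φ) Ψ) →
      ProveA A APa APe (implA φ (boxF a Ψ))
  | surj {a : A} {φ : AForm A APa APe a} :
      ProveA A APa APe (implA φ (AForm.dia a (WForm.exi a φ)))
  | func {a : A} {φ : AForm A APa APe a} :
      ProveA A APa APe (implA (AForm.dia a (WForm.exi a φ)) φ)

/-- Derivability `⊢_e` of world formulas. -/
inductive ProveE (A : Type) [Fintype A] (APa : A → Type) (APe : Type) :
    WForm A APa APe → Prop where
  | taut {Φ : WForm A APa APe} : WTaut Φ → ProveE A APa APe Φ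
  | mp {Φ Ψ : WForm A APa APe} :
      ProveE A APa APe (implW Φ Ψ) → ProveE A APa APe Φ → ProveE A APa APe Ψ
  | nec {a : A} {φ : AForm A APa APe a} :
      ProveA A APa APe φ → ProveE A APa APe (allF a φ)
  | monoExi {a : A} {φ ψ : AForm A APa APe a} :
      ProveA A APa APe (implA φ ψ) →
      ProveE A APa APe (implW (WForm.exi a φ) (WForm.exi a ψ))
  | monoAll {a : A} {φ ψ : AForm A APa APe a} :
      ProveA A APa APe (implA φ ψ) →
      ProveE A APa APe (implW (allF a φ) (allF a ψ))
  | adj1 {a : A} {Φ : WForm A APa APe} {ψ : AForm A APa APe a} :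
      ProveA A APa APe (implA (AForm.dia a Φ) ψ) →
      ProveE A APa APe (implW Φ (allF a ψ))
  | adj2 {a : A} {φ : AForm A APa APe a} {Ψ : WForm A APa APe} :
      ProveA A APa APe (implA φ (boxF a Ψ)) →
      ProveE A APa APe (implW (WForm.exi a φ) Ψ)
  | nonempty : ProveE A APa APe (neAxiom A APa APe)
end

/-! ## Chromatic hypergraphs and their models -/

/-- A chromatic hypergraph over the set of agents `A`. -/
structure ChromHyp (A : Type) where
  /-- hyperedges (worlds) -/
  E : Type
  /-- views of agent `a` -/
  V : A → Type
  /-- the surjective partial function assigning to a hyperedge the view of agent `a` in it -/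
  proj : ∀ a : A, E → Option (V a)
  surj : ∀ (a : A) (v : V a), ∃ e : E, proj a e = some v
  edge_nonempty : ∀ e : E, ∃ a : A, (proj a e).isSome

/-- A chromatic hypergraph model: a chromatic hypergraph together with valuations. -/
structure ChromHypModel (A : Type) (APa : A → Type) (APe : Type) extends ChromHyp A where
  valA : ∀ a : A, APa a → Set (V a)
  valE : APe → Set E

mutual
/-- Satisfaction `H, v ⊨_a φ` of an agent formula at a view of agent `a`. -/
def SatA (H : ChromHypModel A APa APe) : ∀ (a : A), H.V a → AForm A APa APe a → Prop
  | a, v, .atom p => v ∈ H.valA a p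
  | _, _, .bot => False
  | a, v, .neg φ => ¬ SatA H a v φ
  | a, v, .and φ ψ => SatA H a v φ ∧ SatA H a v ψ
  | a, v, .dia _ Φ => ∃ e : H.E, H.proj a e = some v ∧ SatE H e Φ

/-- Satisfaction `H, e ⊨_e Φ` of a world formula at a hyperedge. -/
def SatE (H : ChromHypModel A APa APe) : H.E → WForm A APa APe → Prop
  | e, .atom p => e ∈ H.valE p
  | _, .bot => False
  | e, .neg Φ => ¬ SatE H e Φ
  | e, .and Φ Ψ => SatE H e Φ ∧ SatE H e Ψ
  | e, .exi a φ => ∃ v : H.V a, H.proj a e = some v ∧ SatA H a v φ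
end

/-! Soundness is proved by simultaneous induction on `⊢_a` and `⊢_e`. The adjunction and
monotonicity rules are sound because `◇_a` and `E_a` are both read along the one relation
`proj_a`, seen from its two ends. Of the frame conditions, surjectivity of `proj_a` validates
`φ → ◇_a E_a φ`, single-valuedness of `proj_a` validates `◇_a E_a φ → φ`, and non-emptiness of
hyperedges validates `⋁_a E_a ⊤`. -/

theorem ATaut.of_compositional {a : A} {φ : AForm A APa APe a} (h : ATaut φ)
    (P : AForm A APa APe a → Prop) (hbot : ¬P .bot) (hneg : ∀ ψ, P ψ.neg ↔ ¬P ψ)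
    (hand : ∀ ψ χ, P (ψ.and χ) ↔ P ψ ∧ P χ) : P φ := by
  classical
  simpa using h (fun ψ => decide (P ψ)) (by simpa using hbot)
    (fun ψ => by rw [Bool.eq_iff_iff]; simp [hneg]) (fun ψ χ => by simp [hand])

theorem WTaut.of_compositional {Φ : WForm A APa APe} (h : WTaut Φ)
    (P : WForm A APa APe → Prop) (hbot : ¬P .bot) (hneg : ∀ Ψ, P Ψ.neg ↔ ¬P Ψ)
    (hand : ∀ Ψ Χ, P (Ψ.and Χ) ↔ P Ψ ∧ P Χ) : P Φ := by
  classical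
  simpa using h (fun Ψ => decide (P Ψ)) (by simpa using hbot)
    (fun Ψ => by rw [Bool.eq_iff_iff]; simp [hneg]) (fun Ψ Χ => by simp [hand])

section Semantics

variable (H : ChromHypModel A APa APe)

@[simp]
theorem satA_implA {a : A} (v : H.V a) (φ ψ : AForm A APa APe a) :
    SatA H a v (implA φ ψ) ↔ (SatA H a v φ → SatA H a v ψ) := by
  simp only [implA, SatA]
  tauto

@[simp]
theorem satE_implW (e : H.E) (Φ Ψ : WForm A APa APe) :
    SatE H e (implW Φ Ψ) ↔ (SatE H e Φ → SatE H e Ψ) := by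
  simp only [implW, SatE]
  tauto

@[simp]
theorem satA_boxF {a : A} (v : H.V a) (Φ : WForm A APa APe) :
    SatA H a v (boxF a Φ) ↔ ∀ e : H.E, H.proj a e = some v → SatE H e Φ := by
  simp [boxF, SatA, SatE]

@[simp]
theorem satE_allF (e : H.E) {a : A} (φ : AForm A APa APe a) :
    SatE H e (allF a φ) ↔ ∀ v : H.V a, H.proj a e = some v → SatA H a v φ := by
  simp [allF, SatE, SatA]

theorem satE_listOrW (e : H.E) (L : List (WForm A APa APe)) :
    SatE H e (listOrW L) ↔ ∃ Φ ∈ L, SatE H e Φ := by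
  induction L with
  | nil => simp [listOrW, SatE]
  | cons Φ L ih =>
    simp only [listOrW, orW, SatE, ih, List.mem_cons, exists_eq_or_imp, not_and_or, not_not]

theorem satE_neAxiom [Fintype A] (e : H.E) : SatE H e (neAxiom A APa APe) := by
  obtain ⟨a, ha⟩ := H.edge_nonempty e
  obtain ⟨v, hv⟩ := Option.isSome_iff_exists.mp ha
  rw [neAxiom, satE_listOrW]
  exact ⟨.exi a (topA a), List.mem_map.mpr ⟨a, by simp, rfl⟩, v, hv, by simp [topA, SatA]⟩

end Semantics

section Soundness

variable [Fintype A]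

mutual

theorem ProveA.sound {a : A} {φ : AForm A APa APe a} :
    ProveA A APa APe φ → ∀ (H : ChromHypModel A APa APe) (v : H.V a), SatA H a v φ
  | .taut h, H, v => h.of_compositional (SatA H _ v) id (fun _ => .rfl) (fun _ _ => .rfl)
  | .mp hφψ hφ, H, v => (satA_implA H v _ _).1 (hφψ.sound H v) (hφ.sound H v)
  | .nec hΦ, H, v => (satA_boxF H v _).2 fun e _ => hΦ.sound H e
  | .monoDia hΦΨ, H, v => by
    rw [satA_implA]
    rintro ⟨e, he, hΦ⟩
    exact ⟨e, he, (satE_implW H e _ _).1 (hΦΨ.sound H e) hΦ⟩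
  | .monoBox hΦΨ, H, v => by
    simp only [satA_implA, satA_boxF]
    exact fun hΦ e he => (satE_implW H e _ _).1 (hΦΨ.sound H e) (hΦ e he)
  | .adj1 h, H, v => by
    rw [satA_implA]
    rintro ⟨e, he, hΦ⟩
    exact (satE_allF H e _).1 ((satE_implW H e _ _).1 (h.sound H e) hΦ) v he
  | .adj2 h, H, v => by
    simp only [satA_implA, satA_boxF]
    exact fun hφ e he => (satE_implW H e _ _).1 (h.sound H e) ⟨v, he, hφ⟩
  | .surj, H, v => by
    obtain ⟨e, he⟩ := H.surj _ v
    exact (satA_implA H v _ _).2 fun hφ => ⟨e, he, v, he, hφ⟩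
  | .func, H, v => by
    rw [satA_implA]
    rintro ⟨e, he, w, hw, hφ⟩
    -- `proj a` is a function, so the view `w` of `a` in `e` is `v` itself.
    obtain rfl : v = w := Option.some_injective _ (he.symm.trans hw)
    exact hφ

theorem ProveE.sound {Φ : WForm A APa APe} :
    ProveE A APa APe Φ → ∀ (H : ChromHypModel A APa APe) (e : H.E), SatE H e Φ
  | .taut h, H, e => h.of_compositional (SatE H e) id (fun _ => .rfl) (fun _ _ => .rfl)
  | .mp hΦΨ hΦ, H, e => (satE_implW H e _ _).1 (hΦΨ.sound H e) (hΦ.sound H e)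
  | .nec hφ, H, e => (satE_allF H e _).2 fun v _ => hφ.sound H v
  | .monoExi hφψ, H, e => by
    rw [satE_implW]
    rintro ⟨v, hv, hφ⟩
    exact ⟨v, hv, (satA_implA H v _ _).1 (hφψ.sound H v) hφ⟩
  | .monoAll hφψ, H, e => by
    simp only [satE_implW, satE_allF]
    exact fun hφ v hv => (satA_implA H v _ _).1 (hφψ.sound H v) (hφ v hv)
  | .adj1 h, H, e => by
    simp only [satE_implW, satE_allF]
    exact fun hΦ v hv => (satA_implA H v _ _).1 (h.sound H v) ⟨e, hv, hΦ⟩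
  | .adj2 h, H, e => by
    rw [satE_implW]
    rintro ⟨v, hv, hφ⟩
    exact (satA_boxF H v _).1 ((satA_implA H v _ _).1 (h.sound H v) hφ) e hv
  | .nonempty, H, e => satE_neAxiom H e

end

end Soundness

/-- **Soundness of 2CH** with respect to chromatic hypergraph models:
every `⊢_a`-derivable agent formula holds at every view of every model, and
every `⊢_e`-derivable world formula holds at every hyperedge of every model. -/
theorem soundness_2CH (A : Type) [Fintype A] (APa : A → Type) (APe : Type) :
    (∀ (a : A) (φ : AForm A APa APe a), ProveA A APa APe φ →
      ∀ (H : ChromHypModel A APa APe) (v : H.V a), SatA H a v φ) ∧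
    (∀ Φ : WForm A APa APe, ProveE A APa APe Φ →
      ∀ (H : ChromHypModel A APa APe) (e : H.E), SatE H e Φ) :=
  ⟨fun _ _ h => h.sound, fun _ h => h.sound⟩
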